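/- Let q be a prime power, let G ∈ F_q^{k×n} be a matrix of rank k with columns g_1,…,g_n, and let s_1, s_2 ≥ 1 with s_1 + s_2 = k. For i ∈ {1,2}, let N(F_{3−i}) denote the number of column indices j with g_j ∈ F_{3−i}. Then E_i(G) ≥ n·s_i/(n − N(F_{3−i})). -/

import Mathlib

open Finset

/-- The `r`-th harmonic number `H_r = ∑_{i=1}^r 1/i`, as a real number (`H_0 = 0`). -/
noncomputable def harm (r : ℕ) : ℝ := ∑ i ∈ Finset.range r, (1 : ℝ) / (i + 1)

/-- The span of the columns of `G` indexed by the subset `S ⊆ {1,…,n}`. -/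
noncomputable def colSpan (F : Type*) [Field F] {k n : ℕ}
    (G : Matrix (Fin k) (Fin n) F) (S : Finset (Fin n)) : Submodule F (Fin k → F) :=
  Submodule.span F ((fun j => fun i => G i j) '' (S : Set (Fin n)))

/-- `α_V(s)`: the number of `s`-element subsets `S ⊆ {1,…,n}` whose columns span a
subspace containing the target subspace `V`. -/
noncomputable def alphaCount (F : Type*) [Field F] {k n : ℕ}
    (G : Matrix (Fin k) (Fin n) F) (V : Submodule F (Fin k → F)) (s : ℕ) : ℕ :=
  Nat.card {S : Finset (Fin n) // S.card = s ∧ V ≤ colSpan F G S}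

/-- The first file subspace `F₁ = span(e_1, …, e_{s₁}) ⊆ F_q^k`. -/
noncomputable def file1 (F : Type*) [Field F] (k s1 : ℕ) : Submodule F (Fin k → F) :=
  Submodule.span F {v : Fin k → F | ∃ i : Fin k, (i : ℕ) < s1 ∧ v = Pi.single i 1}

/-- The second file subspace `F₂ = span(e_{s₁+1}, …, e_k) ⊆ F_q^k`. -/
noncomputable def file2 (F : Type*) [Field F] (k s1 : ℕ) : Submodule F (Fin k → F) :=
  Submodule.span F {v : Fin k → F | ∃ i : Fin k, s1 ≤ (i : ℕ) ∧ v = Pi.single i 1}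

/-- The expected retrieval time `E(G, V) = n·H_n − ∑_{s=1}^{n−1} α_V(s)/C(n−1,s)`. -/
noncomputable def Etime (F : Type*) [Field F] {k n : ℕ}
    (G : Matrix (Fin k) (Fin n) F) (V : Submodule F (Fin k → F)) : ℝ :=
  (n : ℝ) * harm n -
    ∑ s ∈ Finset.Icc 1 (n - 1), (alphaCount F G V s : ℝ) / ((n - 1).choose s : ℝ)

/-- `N(W)`: the number of columns of `G` contained in the subspace `W`. -/
noncomputable def Ncount (F : Type*) [Field F] {k n : ℕ}
    (G : Matrix (Fin k) (Fin n) F) (W : Submodule F (Fin k → F)) : ℕ :=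
  Nat.card {j : Fin n // (fun i => G i j) ∈ W}

/-!
Let `A` be the set of columns outside `W = F_{3-i}` and `m = |A| = n - N(W)`. Since
`F_i ⊔ W` is the whole space, a set `S` of columns whose span contains `F_i` has at least
`s_i` columns in `A` (count dimensions in `span S ≤ span (S ∩ A) ⊔ W`). As
`n H_n = ∑_S 1/C(n-1,|S|)` over all proper subsets `S`, the retrieval time is at least the weight
`∑ 1/C(n-1,|S|)` of the sets with `|S ∩ A| < s_i`. The sets with `|S ∩ A| = t` weigh
`∑_j C(m,t) C(n-m,j) / C(n-1,t+j) = n/(m-t) ≥ n/m` (induction on `n - m` by Pascal's rule),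
so the `s_i` layers `t < s_i` weigh at least `n s_i / m`.
-/

theorem cast_choose_succ_div_cast_choose {N s : ℕ} (hs : s ≤ N) :
    ((N + 1).choose s : ℝ) / N.choose s = (N + 1) / (N + 1 - s) := by
  have hpos : (0 : ℝ) < N.choose s := by exact_mod_cast Nat.choose_pos hs
  have hlt : (s : ℝ) < N + 1 := by exact_mod_cast Nat.lt_succ_of_le hs
  have h := congrArg (Nat.cast (R := ℝ)) (Nat.choose_mul_succ_eq N s)
  push_cast [Nat.cast_sub (Nat.le_succ_of_le hs)] at h
  rw [div_eq_div_iff hpos.ne' (by linarith)]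
  linarith

theorem mul_harm_eq_sum_choose_mul_inv_choose (N : ℕ) :
    (N + 1) * harm (N + 1) =
      ∑ s ∈ range (N + 2), ((N + 1).choose s : ℝ) * (N.choose s : ℝ)⁻¹ := by
  -- the term `s = N + 1` vanishes: `N.choose (N + 1) = 0` and `0⁻¹ = 0`
  rw [sum_range_succ, Nat.choose_eq_zero_of_lt (Nat.lt_succ_self N), Nat.cast_zero, inv_zero,
    mul_zero, add_zero, harm, mul_sum, ← sum_range_reflect]
  refine sum_congr rfl fun s hsN => ?_
  have hs : s ≤ N := Nat.lt_succ_iff.1 (mem_range.1 hsN)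
  rw [Nat.add_sub_cancel, ← div_eq_mul_inv, cast_choose_succ_div_cast_choose hs, Nat.cast_sub hs]
  ring

theorem inv_cast_choose_succ_add_inv_cast_choose_succ_succ {N t : ℕ} (ht : t ≤ N) :
    ((N + 1).choose t : ℝ)⁻¹ + ((N + 1).choose (t + 1) : ℝ)⁻¹ =
      (N + 2) / ((N + 1) * N.choose t) := by
  have hpos : (0 : ℝ) < N.choose t := by exact_mod_cast Nat.choose_pos ht
  have hlt : (t : ℝ) < N + 1 := by exact_mod_cast Nat.lt_succ_of_le ht
  have h1 : ((N + 1).choose t : ℝ) = (N + 1) * N.choose t / (N + 1 - t) := by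
    rw [eq_div_iff (by linarith)]
    have := cast_choose_succ_div_cast_choose ht
    rwa [div_eq_div_iff hpos.ne' (by linarith)] at this
  have h2 : ((N + 1).choose (t + 1) : ℝ) = (N + 1) * N.choose t / (t + 1) := by
    rw [eq_div_iff (by positivity)]
    exact_mod_cast (Nat.add_one_mul_choose_eq N t).symm
  rw [h1, h2]
  field_simp
  ring

theorem sum_cast_choose_mul_inv_cast_choose (b : ℕ) {N t : ℕ} (ht : t ≤ N) :
    ∑ j ∈ range (b + 1), (b.choose j : ℝ) * ((N + b).choose (t + j) : ℝ)⁻¹ =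
      (N + b + 1) / ((N + 1) * N.choose t) := by
  induction b generalizing N t with
  | zero =>
    have hpos : (0 : ℝ) < N.choose t := by exact_mod_cast Nat.choose_pos ht
    simp only [zero_add, range_one, add_zero, sum_singleton, Nat.choose_self, Nat.cast_one,
      one_mul, CharP.cast_eq_zero]
    field_simp
  | succ b ih =>
    calc ∑ j ∈ range (b + 1 + 1),
          ((b + 1).choose j : ℝ) * ((N + (b + 1)).choose (t + j) : ℝ)⁻¹
        = ∑ j ∈ range (b + 1), (b.choose j : ℝ) * ((N + 1 + b).choose (t + j) : ℝ)⁻¹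
          + ∑ j ∈ range (b + 1),
            (b.choose j : ℝ) * ((N + 1 + b).choose (t + 1 + j) : ℝ)⁻¹ := by
          rw [show N + (b + 1) = N + 1 + b by ring,
            sum_choose_succ_mul (fun j _ => ((N + 1 + b).choose (t + j) : ℝ)⁻¹)]
          congr 1
          refine sum_congr rfl fun j _ => ?_
          rw [← add_assoc, add_right_comm t j 1]
      _ = (N + 1 + b + 1) / (N + 1 + 1)
          * (((N + 1).choose t : ℝ)⁻¹ + ((N + 1).choose (t + 1) : ℝ)⁻¹) := by
          rw [ih ht.step, ih (Nat.succ_le_succ ht), mul_add, ← div_eq_mul_inv, ← div_eq_mul_inv,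
            div_div, div_div]
          push_cast
          ring
      _ = (N + (b + 1 : ℕ) + 1) / ((N + 1) * N.choose t) := by
          have hpos : (0 : ℝ) < N.choose t := by exact_mod_cast Nat.choose_pos ht
          rw [inv_cast_choose_succ_add_inv_cast_choose_succ_succ ht]
          field_simp
          push_cast
          ring

theorem sum_filter_card_inter_eq {α R : Type*} [Fintype α] [DecidableEq α] [AddCommMonoid R]
    (A : Finset α) (t : ℕ) (w : ℕ → R) :
    ∑ S : Finset α with #(S ∩ A) = t, w #S =
      (#A).choose t • ∑ j ∈ range (#Aᶜ + 1), (#Aᶜ).choose j • w (t + j) := by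
  have hsplit {P Q : Finset α} (hP : P ⊆ A) (hQ : Q ⊆ Aᶜ) :
      (P ∪ Q) ∩ A = P ∧ (P ∪ Q) \ A = Q := by
    have hQA := subset_compl_iff_disjoint_right.1 hQ
    rw [union_inter_distrib_right, union_sdiff_distrib, inter_eq_left.2 hP,
      disjoint_iff_inter_eq_empty.1 hQA, sdiff_eq_empty_iff_subset.2 hP,
      sdiff_eq_self_of_disjoint hQA, union_empty, empty_union]
    exact ⟨rfl, rfl⟩
  calc ∑ S : Finset α with #(S ∩ A) = t, w #S
      = ∑ p ∈ powersetCard t A ×ˢ Aᶜ.powerset, w (t + #p.2) := by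
        refine sum_nbij' (fun S => (S ∩ A, S \ A)) (fun p => p.1 ∪ p.2) ?_ ?_ ?_ ?_ ?_
        · intro S hS
          simp only [mem_filter, mem_univ, true_and] at hS
          simp only [mem_product, mem_powersetCard, mem_powerset, sdiff_eq_inter_compl]
          exact ⟨⟨inter_subset_right, hS⟩, inter_subset_right⟩
        · rintro ⟨P, Q⟩ hp
          simp only [mem_product, mem_powersetCard, mem_powerset] at hp
          simp only [mem_filter, mem_univ, true_and, (hsplit hp.1.1 hp.2).1, hp.1.2]
        · intro S _
          exact sup_inf_sdiff S A
        · rintro ⟨P, Q⟩ hp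
          simp only [mem_product, mem_powersetCard, mem_powerset] at hp
          simp only [hsplit hp.1.1 hp.2]
        · intro S hS
          simp only [mem_filter, mem_univ, true_and] at hS
          rw [← card_inter_add_card_sdiff S A, hS]
    _ = (#A).choose t • ∑ j ∈ range (#Aᶜ + 1), (#Aᶜ).choose j • w (t + j) := by
        rw [sum_product]
        dsimp only
        rw [sum_const, card_powersetCard, sum_powerset_apply_card (fun j => w (t + j))]

theorem finrank_le_card_inter_add_finrank {K M ι : Type*} [DivisionRing K] [AddCommGroup M]
    [Module K M] [FiniteDimensional K M] [DecidableEq ι] {v : ι → M} {V W : Submodule K M}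
    (hVW : V ⊔ W = ⊤) {A : Finset ι} (hA : ∀ i ∉ A, v i ∈ W) {S : Finset ι}
    (hS : V ≤ Submodule.span K (v '' S)) :
    Module.finrank K M ≤ #(S ∩ A) + Module.finrank K W := by
  have hspan : Submodule.span K (v '' S) ≤ Submodule.span K (v '' ↑(S ∩ A)) ⊔ W := by
    refine Submodule.span_le.2 ?_
    rintro _ ⟨i, hi, rfl⟩
    by_cases hiA : i ∈ A
    · exact Submodule.mem_sup_left (Submodule.subset_span ⟨i, by simp [hi, hiA], rfl⟩)
    · exact Submodule.mem_sup_right (hA i hiA)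
  have htop : Submodule.span K (v '' ↑(S ∩ A)) ⊔ W = ⊤ :=
    eq_top_iff.2 (hVW ▸ sup_le (hS.trans hspan) le_sup_right)
  calc Module.finrank K M = Module.finrank K (⊤ : Submodule K M) := (finrank_top K M).symm
    _ ≤ Module.finrank K (Submodule.span K (v '' ↑(S ∩ A))) + Module.finrank K W :=
        htop ▸ Submodule.finrank_add_le_finrank_add_finrank _ _
    _ ≤ #(S ∩ A) + Module.finrank K W := by
        classical
        gcongr
        rw [← coe_image]
        exact (finrank_span_finset_le_card _).trans card_image_le

theorem finrank_span_single_one_le {K ι : Type*} [Field K] [Fintype ι] [DecidableEq ι]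
    (p : ι → Prop) [DecidablePred p] :
    Module.finrank K (Submodule.span K {v : ι → K | ∃ i, p i ∧ v = Pi.single i 1}) ≤
      #{i | p i} := by
  classical
  have hset : {v : ι → K | ∃ i, p i ∧ v = Pi.single i 1} =
      (({i | p i} : Finset ι).image (Pi.single · (1 : K)) : Set (ι → K)) := by
    ext v
    simp [eq_comm]
  rw [hset]
  exact (finrank_span_finset_le_card _).trans card_image_le

theorem colSpan_univ_eq_top {F : Type*} [Field F] {k n : ℕ} {G : Matrix (Fin k) (Fin n) F}
    (hrank : G.rank = k) : colSpan F G univ = ⊤ := by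
  refine Submodule.eq_top_of_finrank_eq
    ((?_ : _ = G.rank).trans (hrank.trans (Module.finrank_fin_fun F).symm))
  rw [Matrix.rank_eq_finrank_span_cols, colSpan, coe_univ, Set.image_univ]
  rfl

theorem file1_sup_file2 (F : Type*) [Field F] (k s1 : ℕ) :
    file1 F k s1 ⊔ file2 F k s1 = ⊤ := by
  rw [file1, file2, ← Submodule.span_union, eq_top_iff, ← (Pi.basisFun F (Fin k)).span_eq]
  refine Submodule.span_mono ?_
  rintro _ ⟨i, rfl⟩
  rw [Pi.basisFun_apply]
  by_cases h : (i : ℕ) < s1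
  · exact Or.inl ⟨i, h, rfl⟩
  · exact Or.inr ⟨i, not_lt.1 h, rfl⟩

theorem finrank_file1_le (F : Type*) [Field F] (k s1 : ℕ) :
    Module.finrank F (file1 F k s1) ≤ s1 :=
  (finrank_span_single_one_le _).trans (Fin.card_filter_val_lt.trans_le (min_le_right _ _))

theorem finrank_file2_le (F : Type*) [Field F] (k s1 : ℕ) :
    Module.finrank F (file2 F k s1) ≤ k - s1 := by
  refine (finrank_span_single_one_le _).trans ?_
  have := card_filter_add_card_filter_not (s := (univ : Finset (Fin k))) (fun i => s1 ≤ (i : ℕ))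
  simp only [not_le, Fin.card_filter_val_lt, card_univ, Fintype.card_fin] at this
  omega

theorem sum_Icc_alphaCount_div_le_sum {F : Type*} [Field F] {k n : ℕ}
    (G : Matrix (Fin k) (Fin n) F) (V : Submodule F (Fin k → F))
    [DecidablePred (V ≤ colSpan F G ·)] :
    ∑ s ∈ Icc 1 (n - 1), (alphaCount F G V s : ℝ) / (n - 1).choose s ≤
      ∑ S : Finset (Fin n) with V ≤ colSpan F G S, ((n - 1).choose #S : ℝ)⁻¹ := by
  calc ∑ s ∈ Icc 1 (n - 1), (alphaCount F G V s : ℝ) / (n - 1).choose s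
      = ∑ s ∈ Icc 1 (n - 1), ∑ S ∈ {S : Finset (Fin n) | V ≤ colSpan F G S} with #S = s,
          ((n - 1).choose #S : ℝ)⁻¹ := by
        refine sum_congr rfl fun s _ => ?_
        rw [alphaCount, Nat.card_eq_fintype_card, Fintype.card_subtype, filter_filter,
          div_eq_mul_inv, ← nsmul_eq_mul, ← sum_const]
        exact sum_congr (filter_congr fun S _ => and_comm) fun S hS => by
          rw [(mem_filter.1 hS).2.2]
    _ ≤ _ := sum_fiberwise_le_sum_of_sum_fiber_nonneg fun _ _ =>
        sum_nonneg fun _ _ => by positivity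

theorem sum_filter_not_le_Etime {F : Type*} [Field F] {k n : ℕ} (hn : 0 < n)
    (G : Matrix (Fin k) (Fin n) F) (V : Submodule F (Fin k → F)) (P : Finset (Fin n) → Prop)
    [DecidablePred P] (hP : ∀ S, V ≤ colSpan F G S → P S) :
    ∑ S : Finset (Fin n) with ¬ P S, ((n - 1).choose #S : ℝ)⁻¹ ≤ Etime F G V := by
  classical
  obtain ⟨N, rfl⟩ := Nat.exists_eq_add_one.2 hn
  have htotal : (N + 1 : ℕ) * harm (N + 1) =
      ∑ S : Finset (Fin (N + 1)), (N.choose #S : ℝ)⁻¹ := by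
    rw [← powerset_univ, sum_powerset_apply_card (fun s => (N.choose s : ℝ)⁻¹), card_univ,
      Fintype.card_fin]
    simp only [nsmul_eq_mul]
    push_cast
    exact mul_harm_eq_sum_choose_mul_inv_choose N
  have hrecover := sum_Icc_alphaCount_div_le_sum G V
  have hmono : ∑ S : Finset (Fin (N + 1)) with V ≤ colSpan F G S, (N.choose #S : ℝ)⁻¹ ≤
      ∑ S : Finset (Fin (N + 1)) with P S, (N.choose #S : ℝ)⁻¹ :=
    sum_le_sum_of_subset_of_nonneg (monotone_filter_right _ fun S _ => hP S)
      fun _ _ _ => by positivity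
  rw [Etime, htotal, ← sum_filter_add_sum_filter_not univ P]
  simp only [Nat.add_sub_cancel] at hrecover ⊢
  linarith

theorem mul_div_sub_Ncount_le_Etime {F : Type*} [Field F] {k n : ℕ}
    {G : Matrix (Fin k) (Fin n) F} (hrank : G.rank = k) {V W : Submodule F (Fin k → F)}
    (hVW : V ⊔ W = ⊤) {d : ℕ} (hd : 0 < d) (hdW : d + Module.finrank F W ≤ k) :
    (n : ℝ) * d / (n - Ncount F G W) ≤ Etime F G V := by
  classical
  set A : Finset (Fin n) := {j | (fun i => G i j) ∉ W}
  have hrecover (S : Finset (Fin n)) (hS : V ≤ colSpan F G S) : d ≤ #(S ∩ A) := by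
    have := finrank_le_card_inter_add_finrank hVW (A := A) (fun j hj => by simpa [A] using hj) hS
    rw [Module.finrank_fin_fun] at this
    omega
  have hdA : d ≤ #A := by simpa using hrecover univ ((colSpan_univ_eq_top hrank).symm ▸ le_top)
  obtain ⟨N, hN⟩ := Nat.exists_eq_add_one.2 (hd.trans_le hdA)
  have hn : n = N + 1 + #Aᶜ := by rw [← hN, card_add_card_compl, Fintype.card_fin]
  have hn' : (n : ℝ) = N + 1 + #Aᶜ := by exact_mod_cast hn
  have hNcount : Ncount F G W = #Aᶜ := by
    rw [Ncount, Nat.card_eq_fintype_card, Fintype.card_subtype, compl_filter]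
    simp only [not_not]
  calc (n : ℝ) * d / (n - Ncount F G W) = ∑ t ∈ range d, (N + #Aᶜ + 1 : ℝ) / (N + 1) := by
        rw [sum_const, card_range, nsmul_eq_mul, hNcount, hn']
        ring
    _ ≤ ∑ t ∈ range d, (#A).choose t • ∑ j ∈ range (#Aᶜ + 1),
          (#Aᶜ).choose j • ((n - 1).choose (t + j) : ℝ)⁻¹ := by
        refine sum_le_sum fun t ht => ?_
        have htN : t ≤ N := by have := mem_range.1 ht; omega
        have hpos : (0 : ℝ) < N.choose t := by exact_mod_cast Nat.choose_pos htN
        have hle : (N.choose t : ℝ) ≤ (N + 1).choose t := by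
          exact_mod_cast Nat.choose_le_succ N t
        simp only [nsmul_eq_mul, hN, show n - 1 = N + #Aᶜ by omega]
        rw [sum_cast_choose_mul_inv_cast_choose _ htN, div_mul_eq_div_div, mul_div_assoc',
          mul_div_right_comm]
        exact le_mul_of_one_le_left (by positivity) ((one_le_div hpos).2 hle)
    _ = ∑ S : Finset (Fin n) with ¬ d ≤ #(S ∩ A), ((n - 1).choose #S : ℝ)⁻¹ := by
        rw [filter_congr fun S _ => not_le.trans mem_range.symm, ← sum_fiberwise_eq_sum_filter]
        exact sum_congr rfl fun t _ =>
          (sum_filter_card_inter_eq A t fun s => ((n - 1).choose s : ℝ)⁻¹).symm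
    _ ≤ Etime F G V := sum_filter_not_le_Etime (by omega) G V _ hrecover

theorem stmt8_general (k n s1 s2 : ℕ)
    (F : Type*) [Field F]
    (G : Matrix (Fin k) (Fin n) F) (hrank : G.rank = k)
    (hs1 : 1 ≤ s1) (hs2 : 1 ≤ s2) (hk : s1 + s2 = k) :
    Etime F G (file1 F k s1) ≥
        (n : ℝ) * (s1 : ℝ) / ((n : ℝ) - (Ncount F G (file2 F k s1) : ℝ)) ∧
      Etime F G (file2 F k s1) ≥
        (n : ℝ) * (s2 : ℝ) / ((n : ℝ) - (Ncount F G (file1 F k s1) : ℝ)) := by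
  have h2 := finrank_file2_le F k s1
  have h1 := finrank_file1_le F k s1
  exact ⟨mul_div_sub_Ncount_le_Etime hrank (file1_sup_file2 F k s1) hs1 (by omega),
    mul_div_sub_Ncount_le_Etime hrank (sup_comm (file1 F k s1) _ ▸ file1_sup_file2 F k s1) hs2
      (by omega)⟩

/-- Projection lower bound: `E_i(G) ≥ n·s_i/(n − N(F_{3−i}))`, where `N(F_{3−i})` is
the number of columns of `G` lying in the other file subspace. -/
theorem stmt8 (q k n s1 s2 : ℕ) (hq : IsPrimePow q)
    (F : Type*) [Field F] [Fintype F] (hF : Fintype.card F = q)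
    (G : Matrix (Fin k) (Fin n) F) (hrank : G.rank = k)
    (hs1 : 1 ≤ s1) (hs2 : 1 ≤ s2) (hk : s1 + s2 = k) :
    Etime F G (file1 F k s1) ≥
        (n : ℝ) * (s1 : ℝ) / ((n : ℝ) - (Ncount F G (file2 F k s1) : ℝ)) ∧
      Etime F G (file2 F k s1) ≥
        (n : ℝ) * (s2 : ℝ) / ((n : ℝ) - (Ncount F G (file1 F k s1) : ℝ)) :=
  stmt8_general k n s1 s2 F G hrank hs1 hs2 hk
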